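/- For all integers k ≥ 1 and n ≥ 1, the number of descending strictly k-Naples parking functions of length n equals ((k+1)/n)·binom(2n, n+k+1); equivalently, n times this number equals (k+1)·binom(2n, n+k+1). -/

import Mathlib

/-- The spots a car with preference `p` checks backward: `p-1, p-2, …, max(p-k,1)`. -/
def backCandidates (k p : ℕ) : List ℕ :=
  ((List.range k).map (fun i => p - (i + 1))).filter (fun s => decide (1 ≤ s))

/-- The spots a car with preference `p` checks when driving forward: `p+1, …, n`. -/
def fwdCandidates (n p : ℕ) : List ℕ :=
  List.range' (p + 1) (n - p)

/-- The spot in which a car with preference `p` parks under the `k`-Naples rule on a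
one-way street with `n` spots, given the set `occ` of already occupied spots
(`none` if the car fails to park). -/
def naplesStep (k n : ℕ) (occ : Finset ℕ) (p : ℕ) : Option ℕ :=
  if p ∈ occ then
    match (backCandidates k p).filter (fun s => decide (s ∉ occ)) with
    | s :: _ => some s
    | [] =>
      match (fwdCandidates n p).filter (fun s => decide (s ∉ occ)) with
      | s :: _ => some s
      | [] => none
  else some p

/-- Runs the `k`-Naples parking process starting from occupied set `occ` for cars with
the given list of preferences.  Returns the list of spots in which the successive cars
park, or `none` if some car fails to park. -/
def naplesSpots (k n : ℕ) : Finset ℕ → List ℕ → Option (List ℕ)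
  | _, [] => some []
  | occ, p :: rest =>
    match naplesStep k n occ p with
    | none => none
    | some s => (naplesSpots k n (insert s occ) rest).map (fun l => s :: l)

/-- All cars with the given preferences successfully park, starting from occupied set `occ`. -/
def ParksAllFrom (k n : ℕ) (occ : Finset ℕ) (prefs : List ℕ) : Prop :=
  (naplesSpots k n occ prefs).isSome

/-- A parking preference of length `n`: a list of `n` numbers in `{1, …, n}`. -/
def IsParkingPref (n : ℕ) (prefs : List ℕ) : Prop :=
  prefs.length = n ∧ ∀ p ∈ prefs, 1 ≤ p ∧ p ≤ n

/-- A `k`-Naples parking function of length `n`. -/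
def IsNaplesPF (k n : ℕ) (prefs : List ℕ) : Prop :=
  IsParkingPref n prefs ∧ ParksAllFrom k n ∅ prefs

/-- Strictly `k`-Naples: a `k`-Naples parking function that is not `(k-1)`-Naples. -/
def StrictlyNaples (k n : ℕ) (f : List ℕ) : Prop :=
  IsNaplesPF k n f ∧ ¬ IsNaplesPF (k - 1) n f

/-!
A descending preference `f` (indexed from `0`) is `k`-Naples exactly when `f[i] + i ≤ n + k`
for all `i`. If `f[t] + t > n + k`, the first `t + 1` cars all park in the `t` spots of
`(n - t, n]`; conversely car `i` always has a free spot among the more than `i` spots of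
`[max (f[i] - k) 1, n]`. Descending lists with such bounds satisfy a Pascal recursion, which
gives the reflection-principle count `C(2n-1, n-1) - C(2n-1, n+k+1)`; so the strictly
`k`-Naples ones number the ballot difference `C(2n-1, n+k) - C(2n-1, n+k+1)`.
-/
lemma mem_backCandidates {k p s : ℕ} :
    s ∈ backCandidates k p ↔ p - k ≤ s ∧ s < p ∧ 1 ≤ s := by
  simp only [backCandidates, List.mem_filter, List.mem_map, List.mem_range, decide_eq_true_eq]
  constructor
  · rintro ⟨⟨i, hi, rfl⟩, hs⟩
    omega
  · rintro ⟨hks, hsp, hs⟩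
    exact ⟨⟨p - s - 1, by omega, by omega⟩, hs⟩

lemma mem_fwdCandidates {n p s : ℕ} : s ∈ fwdCandidates n p ↔ p < s ∧ s ≤ n := by
  rw [fwdCandidates, List.mem_range'_1]
  omega

lemma mem_of_filter_eq_cons {α : Type*} {l t : List α} {P : α → Bool} {s : α}
    (h : l.filter P = s :: t) : s ∈ l ∧ P s :=
  List.mem_filter.mp (h ▸ List.mem_cons_self)

lemma naplesStep_eq_some {k n p s : ℕ} {occ : Finset ℕ} (hp : p ≤ n)
    (h : naplesStep k n occ p = some s) : p - k ≤ s ∧ s ≤ n ∧ s ∉ occ := by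
  unfold naplesStep at h
  split_ifs at h with hpo
  · split at h
    · next hback =>
      cases h
      obtain ⟨hs, hso⟩ := mem_of_filter_eq_cons hback
      rw [mem_backCandidates] at hs
      exact ⟨hs.1, by omega, by simpa using hso⟩
    · split at h
      · next hfwd =>
        cases h
        obtain ⟨hs, hso⟩ := mem_of_filter_eq_cons hfwd
        rw [mem_fwdCandidates] at hs
        exact ⟨by omega, hs.2, by simpa using hso⟩
      · cases h
  · cases h
    exact ⟨Nat.sub_le p k, hp, hpo⟩

lemma naplesStep_isSome {k n p s : ℕ} {occ : Finset ℕ} (hks : p - k ≤ s) (hs : 1 ≤ s)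
    (hsn : s ≤ n) (hso : s ∉ occ) : (naplesStep k n occ p).isSome := by
  unfold naplesStep
  split_ifs with hpo
  · split
    · rfl
    · next hback =>
      split
      · rfl
      · next hfwd =>
        rw [List.filter_eq_nil_iff] at hback hfwd
        rcases lt_trichotomy s p with hsp | rfl | hps
        · exact absurd hso (by simpa using hback s (mem_backCandidates.mpr ⟨hks, hsp, hs⟩))
        · exact absurd hpo hso
        · exact absurd hso (by simpa using hfwd s (mem_fwdCandidates.mpr ⟨hps, hsn⟩))
  · rfl

lemma naplesSpots_eq_some {k n : ℕ} {prefs l : List ℕ} {occ : Finset ℕ}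
    (hp : ∀ p ∈ prefs, p ≤ n) (h : naplesSpots k n occ prefs = some l) :
    List.Forall₂ (fun p s => p - k ≤ s ∧ s ≤ n) prefs l ∧ l.Nodup ∧ ∀ s ∈ l, s ∉ occ := by
  induction prefs generalizing occ l with
  | nil =>
    cases h
    simp
  | cons p rest ih =>
    simp only [List.forall_mem_cons] at hp
    rw [naplesSpots] at h
    split at h
    · cases h
    · next s hstep =>
      obtain ⟨l, hl, rfl⟩ := Option.map_eq_some_iff.mp h
      obtain ⟨hks, hsn, hso⟩ := naplesStep_eq_some hp.1 hstep
      obtain ⟨hrel, hnodup, hfree⟩ := ih hp.2 hl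
      refine ⟨.cons ⟨hks, hsn⟩ hrel, List.nodup_cons.mpr ⟨fun hs => hfree s hs
        (Finset.mem_insert_self s occ), hnodup⟩, ?_⟩
      rintro t (_ | ⟨_, ht⟩)
      · exact hso
      · exact fun hto => hfree t ht (Finset.mem_insert_of_mem hto)

lemma parksAllFrom_of_forall {k n : ℕ} {prefs : List ℕ} {occ : Finset ℕ}
    (hp : ∀ p ∈ prefs, p ≤ n)
    (h : ∀ i (hi : i < prefs.length), occ.card + i + max (prefs[i] - k) 1 ≤ n) :
    ParksAllFrom k n occ prefs := by
  induction prefs generalizing occ with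
  | nil => rfl
  | cons p rest ih =>
    simp only [List.forall_mem_cons] at hp
    have hfree : ∃ s ∈ Finset.Icc (max (p - k) 1) n, s ∉ occ := by
      refine Finset.exists_mem_notMem_of_card_lt_card ?_
      have := h 0 (by simp)
      simp only [List.getElem_cons_zero] at this
      rw [Nat.card_Icc]
      omega
    obtain ⟨s, hs, hso⟩ := hfree
    rw [Finset.mem_Icc, max_le_iff] at hs
    obtain ⟨s', hstep⟩ := Option.isSome_iff_exists.mp
      (naplesStep_isSome (k := k) (p := p) hs.1.1 hs.1.2 hs.2 hso)
    have hrest : ParksAllFrom k n (insert s' occ) rest := by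
      refine ih hp.2 fun i hi => ?_
      have := h (i + 1) (by simpa using hi)
      rw [Finset.card_insert_of_notMem (naplesStep_eq_some hp.1 hstep).2.2]
      simp only [List.getElem_cons_succ] at this
      omega
    simpa [ParksAllFrom, naplesSpots, hstep] using hrest

lemma isNaplesPF_iff_of_pairwise {k n : ℕ} {f : List ℕ} (hf : f.Pairwise (fun a b => b ≤ a)) :
    IsNaplesPF k n f ↔ IsParkingPref n f ∧ ∀ i (hi : i < f.length), f[i] + i ≤ n + k := by
  constructor
  · rintro ⟨hpref, hparks⟩
    refine ⟨hpref, fun t ht => ?_⟩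
    by_contra! hbig
    obtain ⟨l, hl⟩ := Option.isSome_iff_exists.mp hparks
    obtain ⟨hrel, hnodup, -⟩ := naplesSpots_eq_some (fun p hp => (hpref.2 p hp).2) hl
    have hlen := hrel.length_eq
    have hfn := hpref.1
    -- the first `t + 1` cars all prefer spots above `n + k - t`, so they park in `(n - t, n]`
    have hlate : ∀ j ≤ t, n - t < l[j]! ∧ l[j]! ≤ n := by
      intro j hj
      have hjf : j < f.length := by omega
      have hjl : j < l.length := by omega
      have hspot := hrel.get hjf hjl
      have hdesc : f[t] ≤ f[j] := by
        rcases hj.lt_or_eq with hlt | rfl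
        · exact List.pairwise_iff_getElem.mp hf j t hjf ht hlt
        · rfl
      simp only [List.get_eq_getElem] at hspot
      rw [getElem!_pos l j hjl]
      omega
    have hcard := Finset.card_le_card_of_injOn (fun j => l[j]!)
      (s := Finset.range (t + 1)) (t := Finset.Ioc (n - t) n)
      (fun j hj => Finset.mem_Ioc.mpr (hlate j (by simpa [Nat.lt_succ_iff] using hj)))
      (fun i hi j hj hij => by
        simp only [Finset.coe_range, Set.mem_Iio] at hi hj hij
        rwa [getElem!_pos l i (by omega), getElem!_pos l j (by omega),
          hnodup.getElem_inj_iff] at hij)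
    rw [Finset.card_range, Nat.card_Ioc] at hcard
    omega
  · rintro ⟨hpref, hbound⟩
    refine ⟨hpref, parksAllFrom_of_forall (fun p hp => (hpref.2 p hp).2) fun i hi => ?_⟩
    have hfi := hbound i hi
    have hfn := hpref.1
    rw [Finset.card_empty]
    omega

def descBounded : ℕ → ℕ → ℕ → Finset (List ℕ)
  | 0, _, _ => {[]}
  | L + 1, m, c =>
    (Finset.Icc 1 (min m c)).biUnion fun h => (descBounded L h (c - 1)).image (List.cons h)

lemma mem_descBounded {L m c : ℕ} {f : List ℕ} :
    f ∈ descBounded L m c ↔ f.length = L ∧ f.Pairwise (fun a b => b ≤ a) ∧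
      (∀ p ∈ f, 1 ≤ p ∧ p ≤ m) ∧ ∀ i (hi : i < f.length), f[i] + i ≤ c := by
  induction L generalizing m c f with
  | zero =>
    simp only [descBounded, Finset.mem_singleton, List.length_eq_zero_iff]
    constructor
    · rintro rfl
      simp
    · exact And.left
  | succ L ih =>
    cases f with
    | nil => simp [descBounded]
    | cons h t =>
      simp only [descBounded, Finset.mem_biUnion, Finset.mem_image, Finset.mem_Icc,
        List.cons.injEq, List.length_cons, Nat.forall_lt_succ_left', List.getElem_cons_zero,
        List.getElem_cons_succ, List.pairwise_cons, List.forall_mem_cons, ih]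
      constructor
      · rintro ⟨h, ⟨h1, hmc⟩, t, ⟨hlen, hdesc, hent, hidx⟩, rfl, rfl⟩
        refine ⟨by omega, ⟨fun b hb => (hent b hb).2, hdesc⟩, ⟨⟨h1, by omega⟩, fun p hp =>
          ⟨(hent p hp).1, (hent p hp).2.trans (by omega)⟩⟩, by omega, fun i hi => ?_⟩
        have := hidx i hi
        omega
      · rintro ⟨hlen, ⟨hle, hdesc⟩, ⟨⟨h1, hm⟩, hent⟩, hc, hidx⟩
        refine ⟨h, ⟨h1, by omega⟩, t, ⟨by omega, hdesc, fun p hp => ⟨(hent p hp).1, hle p hp⟩,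
          fun i hi => ?_⟩, rfl, rfl⟩
        have := hidx i hi
        omega

lemma card_descBounded_succ (L m c : ℕ) :
    (descBounded (L + 1) m c).card =
      ∑ h ∈ Finset.Icc 1 (min m c), (descBounded L h (c - 1)).card := by
  rw [descBounded, Finset.card_biUnion]
  · exact Finset.sum_congr rfl fun h _ => Finset.card_image_of_injective _ List.cons_injective
  · intro a _ b _ hab
    simp only [Function.onFun, Finset.disjoint_left, Finset.mem_image]
    rintro _ ⟨u, _, rfl⟩ ⟨v, _, hv⟩
    exact hab (List.cons.inj hv).1.symm

lemma card_descBounded_succ_succ {L m c : ℕ} (h : m + 1 ≤ c) :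
    (descBounded (L + 1) (m + 1) c).card =
      (descBounded (L + 1) m c).card + (descBounded L (m + 1) (c - 1)).card := by
  rw [card_descBounded_succ, card_descBounded_succ, min_eq_left h, min_eq_left (by omega),
    Finset.sum_Icc_succ_top (by omega)]

lemma descBounded_succ_of_le {L m c : ℕ} (h : c ≤ m) :
    descBounded L (m + 1) c = descBounded L m c := by
  cases L with
  | zero => rfl
  | succ L => rw [descBounded, descBounded, min_eq_right h, min_eq_right (by omega)]

lemma card_descBounded_add_choose {L m c : ℕ} (hm : m ≤ c) (hL : L ≤ c) :
    (descBounded L (m + 1) c).card + (L + m).choose (c + 1) = (L + m).choose m := by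
  induction L generalizing m c with
  | zero =>
    rw [Nat.choose_eq_zero_of_lt (by omega), Nat.zero_add, Nat.choose_self]
    rfl
  | succ L ihL =>
    induction m with
    | zero =>
      have htail := ihL (m := 0) (c := c - 1) (by omega) (by omega)
      rw [Nat.choose_eq_zero_of_lt (by omega)] at htail ⊢
      rw [card_descBounded_succ, min_eq_left (by omega), Finset.Icc_self, Finset.sum_singleton]
      simpa using htail
    | succ m ihm =>
      have hprev := ihm (by omega)
      have hpascal (j : ℕ) : (L + 1 + (m + 1)).choose (j + 1) =
          (L + 1 + m).choose j + (L + 1 + m).choose (j + 1) := by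
        rw [show L + 1 + (m + 1) = L + 1 + m + 1 by ring, Nat.choose_succ_succ']
      rw [hpascal, hpascal]
      rcases (show m + 2 ≤ c ∨ c = m + 1 by omega) with hc | rfl
      · have htail := ihL (m := m + 1) (c := c - 1) (by omega) (by omega)
        rw [show L + (m + 1) = L + 1 + m by ring, show c - 1 + 1 = c by omega] at htail
        rw [card_descBounded_succ_succ hc]
        omega
      · rw [descBounded_succ_of_le le_rfl]
        omega

lemma succ_mul_choose_sub_choose (m k : ℕ) :
    (m + 1) * ((2 * m + 1).choose (m + k + 1) - (2 * m + 1).choose (m + k + 2)) =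
      (k + 1) * (2 * m + 2).choose (m + k + 2) := by
  rcases le_or_gt k m with hkm | hmk
  · have hY := Nat.add_one_mul_choose_eq (2 * m + 1) (m + k + 1)
    have hB := Nat.choose_succ_right_eq (2 * m + 1) (m + k + 1)
    rw [show 2 * m + 1 - (m + k + 1) = m - k by omega] at hB
    have hBA : (2 * m + 1).choose (m + k + 2) ≤ (2 * m + 1).choose (m + k + 1) :=
      Nat.le_of_mul_le_mul_right (hB ▸ Nat.mul_le_mul_left _ (by omega))
        (by omega : 0 < m + k + 2)
    apply Nat.eq_of_mul_eq_mul_right (show 0 < m + k + 2 by omega)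
    zify [hBA, hkm] at hY hB ⊢
    linear_combination (k + 1) * hY - (m + 1) * hB
  · rw [Nat.choose_eq_zero_of_lt (by omega : 2 * m + 2 < m + k + 2),
      Nat.choose_eq_zero_of_lt (by omega : 2 * m + 1 < m + k + 1)]
    simp

lemma isNaplesPF_and_pairwise_iff {k n : ℕ} {f : List ℕ} :
    IsNaplesPF k n f ∧ f.Pairwise (fun a b => b ≤ a) ↔ f ∈ descBounded n n (n + k) := by
  rw [mem_descBounded]
  constructor
  · rintro ⟨hnaples, hf⟩
    obtain ⟨⟨hlen, hent⟩, hidx⟩ := (isNaplesPF_iff_of_pairwise hf).mp hnaples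
    exact ⟨hlen, hf, hent, hidx⟩
  · rintro ⟨hlen, hf, hent, hidx⟩
    exact ⟨(isNaplesPF_iff_of_pairwise hf).mpr ⟨⟨hlen, hent⟩, hidx⟩, hf⟩

lemma descBounded_mono {L m c c' : ℕ} (h : c ≤ c') : descBounded L m c ⊆ descBounded L m c' := by
  intro f hf
  rw [mem_descBounded] at hf ⊢
  exact ⟨hf.1, hf.2.1, hf.2.2.1, fun i hi => (hf.2.2.2 i hi).trans h⟩

lemma setOf_strictlyNaples_pairwise (k n : ℕ) :
    {f : List ℕ | StrictlyNaples k n f ∧ f.Pairwise (fun a b => b ≤ a)} =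
      ↑(descBounded n n (n + k) \ descBounded n n (n + (k - 1))) := by
  ext f
  simp only [Set.mem_ofPred_eq, Finset.coe_sdiff, Set.mem_sdiff, Finset.mem_coe,
    ← isNaplesPF_and_pairwise_iff, StrictlyNaples]
  tauto

theorem statement15_general (k n : ℕ) (hk : 1 ≤ k) :
    n * Set.ncard {f : List ℕ | StrictlyNaples k n f ∧ List.Pairwise (fun a b => b ≤ a) f} =
      (k + 1) * (2 * n).choose (n + k + 1) := by
  rcases n with _ | m
  · simp
  rw [setOf_strictlyNaples_pairwise, Set.ncard_coe_finset,
    Finset.card_sdiff_of_subset (descBounded_mono (by omega))]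
  have hstrict := card_descBounded_add_choose (L := m + 1) (m := m) (c := m + 1 + k)
    (by omega) (by omega)
  have hweak := card_descBounded_add_choose (L := m + 1) (m := m) (c := m + 1 + (k - 1))
    (by omega) (by omega)
  rw [show m + 1 + m = 2 * m + 1 by ring] at hstrict hweak
  rw [show m + 1 + (k - 1) + 1 = m + k + 1 by omega] at hweak
  rw [show m + 1 + k + 1 = m + k + 2 by ring] at hstrict ⊢
  rw [show 2 * (m + 1) = 2 * m + 2 by ring, ← succ_mul_choose_sub_choose]
  congr 1
  omega

/-- For all `k ≥ 1` and `n ≥ 1`, the number of descending strictly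
`k`-Naples parking functions of length `n` equals `((k+1)/n)·binom(2n, n+k+1)`;
equivalently, `n` times this number equals `(k+1)·binom(2n, n+k+1)`. -/
theorem statement15 (k n : ℕ) (hk : 1 ≤ k) (hn : 1 ≤ n) :
    n * Set.ncard {f : List ℕ | StrictlyNaples k n f ∧ List.Pairwise (fun a b => b ≤ a) f} =
      (k + 1) * (2 * n).choose (n + k + 1) :=
  statement15_general k n hk
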